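/- Let a₀,…,a₇ ≥ 0 with Σᵢaᵢ = 1, and suppose a₄+a₅+a₆+a₇ = x and a₁+a₂+a₅+a₆ = x for some x ∈ [0,1]. Then the Shannon entropy H₈(a) = -Σᵢ₌₀⁷ aᵢ ln aᵢ satisfies H₈(a) ≤ ln 2 + 2H₂(x), where H₂(x) = -x ln x - (1-x) ln(1-x). -/
import Mathlib


/-- The binary entropy function. -/
noncomputable def H₂ (x : ℝ) : ℝ := -x * Real.log x - (1 - x) * Real.log (1 - x)

/-- The Shannon entropy of an 8-component probability vector. -/
noncomputable def H₈ (a : Fin 8 → ℝ) : ℝ := -∑ i, a i * Real.log (a i)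

lemma gibbs_pt (b c : ℝ) (hb : 0 ≤ b) (hc : 0 ≤ c) (h : 0 < b → 0 < c) :
    b * Real.log c - b * Real.log b ≤ c - b := by
  rcases eq_or_lt_of_le hb with h0 | hb'
  · simp [← h0]; exact hc
  · have hc' := h hb'
    have hlog : Real.log (c / b) ≤ c / b - 1 :=
      Real.log_le_sub_one_of_pos (by positivity)
    have hdiv : Real.log (c / b) = Real.log c - Real.log b :=
      Real.log_div hc'.ne' hb'.ne'
    have hmul := mul_le_mul_of_nonneg_left hlog hb'.le
    rw [hdiv] at hmul
    have : b * (c / b - 1) = c - b := by field_simp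
    linarith [hmul, this.le]

/-- Entropy of a pair summing to 1 is at most log 2. -/
lemma pair_ent (p q : ℝ) (hp : 0 ≤ p) (hq : 0 ≤ q) (hs : p + q = 1) :
    -(p * Real.log p) - q * Real.log q ≤ Real.log 2 := by
  have g1 := gibbs_pt p (1/2) hp (by norm_num) (fun _ => by norm_num)
  have g2 := gibbs_pt q (1/2) hq (by norm_num) (fun _ => by norm_num)
  have hl : Real.log (1/2) = -Real.log 2 := by
    rw [one_div, Real.log_inv]
  rw [hl] at g1 g2
  have hpq : p * Real.log 2 + q * Real.log 2 = Real.log 2 := by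
    rw [← add_mul, hs, one_mul]
  linarith [g1, g2, hpq]

/-- If `a₀,…,a₇ ≥ 0` sum to 1 and satisfy `a₄+a₅+a₆+a₇ = x`, `a₁+a₂+a₅+a₆ = x`, then
`H₈(a) ≤ ln 2 + 2 H₂(x)`. -/
theorem entropy_upper_bound (x : ℝ) (hx : x ∈ Set.Icc (0:ℝ) 1) (a : Fin 8 → ℝ)
    (hnn : ∀ i, 0 ≤ a i) (hsum : ∑ i, a i = 1)
    (h1 : a 4 + a 5 + a 6 + a 7 = x) (h2 : a 1 + a 2 + a 5 + a 6 = x) :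
    H₈ a ≤ Real.log 2 + 2 * H₂ x := by
  obtain ⟨hx0, hx1⟩ := hx
  rw [Fin.sum_univ_eight] at hsum
  have hH8 : H₈ a = -(a 0 * Real.log (a 0) + a 1 * Real.log (a 1) + a 2 * Real.log (a 2)
      + a 3 * Real.log (a 3) + a 4 * Real.log (a 4) + a 5 * Real.log (a 5)
      + a 6 * Real.log (a 6) + a 7 * Real.log (a 7)) := by
    rw [H₈, Fin.sum_univ_eight]
  rcases eq_or_lt_of_le hx0 with h0 | hx0'
  · -- x = 0
    have hz : ∀ i : Fin 8, i ∈ ({1,2,4,5,6,7} : Finset (Fin 8)) → a i = 0 := by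
      intro i hi
      fin_cases hi <;>
        [ linarith [hnn 1, hnn 2, hnn 5, hnn 6];
          linarith [hnn 1, hnn 2, hnn 5, hnn 6];
          linarith [hnn 4, hnn 5, hnn 6, hnn 7];
          linarith [hnn 4, hnn 5, hnn 6, hnn 7];
          linarith [hnn 4, hnn 5, hnn 6, hnn 7];
          linarith [hnn 4, hnn 5, hnn 6, hnn 7]]
    have e1 := hz 1 (by decide); have e2 := hz 2 (by decide)
    have e4 := hz 4 (by decide); have e5 := hz 5 (by decide)
    have e6 := hz 6 (by decide); have e7 := hz 7 (by decide)
    have hp := pair_ent (a 0) (a 3) (hnn 0) (hnn 3) (by linarith)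
    have hH2 : H₂ x = 0 := by rw [← h0]; simp [H₂]
    rw [hH8, e1, e2, e4, e5, e6, e7, hH2]
    simp
    linarith
  rcases eq_or_lt_of_le hx1 with h1' | hx1'
  · -- x = 1
    have hz : ∀ i : Fin 8, i ∈ ({0,1,2,3,4,7} : Finset (Fin 8)) → a i = 0 := by
      intro i hi
      fin_cases hi <;>
        [ linarith [hnn 0, hnn 1, hnn 2, hnn 3];
          linarith [hnn 0, hnn 1, hnn 2, hnn 3];
          linarith [hnn 0, hnn 1, hnn 2, hnn 3];
          linarith [hnn 0, hnn 1, hnn 2, hnn 3];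
          linarith [hnn 1, hnn 2, hnn 4, hnn 7, hnn 0, hnn 3];
          linarith [hnn 1, hnn 2, hnn 4, hnn 7, hnn 0, hnn 3]]
    have e0 := hz 0 (by decide); have e1 := hz 1 (by decide)
    have e2 := hz 2 (by decide); have e3 := hz 3 (by decide)
    have e4 := hz 4 (by decide); have e7 := hz 7 (by decide)
    have hp := pair_ent (a 5) (a 6) (hnn 5) (hnn 6) (by linarith)
    have hH2 : H₂ x = 0 := by rw [h1']; simp [H₂]
    rw [hH8, e0, e1, e2, e3, e4, e7, hH2]
    simp
    linarith
  · -- 0 < x < 1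
    set t := 1 - x with ht
    have htpos : 0 < t := by linarith
    have lxx : Real.log (x * x / 2) = Real.log x + Real.log x - Real.log 2 := by
      rw [Real.log_div (by positivity) (by norm_num), Real.log_mul hx0'.ne' hx0'.ne']
    have ltt : Real.log (t * t / 2) = Real.log t + Real.log t - Real.log 2 := by
      rw [Real.log_div (by positivity) (by norm_num), Real.log_mul htpos.ne' htpos.ne']
    have lxt : Real.log (x * t / 2) = Real.log x + Real.log t - Real.log 2 := by
      rw [Real.log_div (by positivity) (by norm_num), Real.log_mul hx0'.ne' htpos.ne']
    have g0 := gibbs_pt (a 0) (t * t / 2) (hnn 0) (by positivity) (fun _ => by positivity)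
    have g3 := gibbs_pt (a 3) (t * t / 2) (hnn 3) (by positivity) (fun _ => by positivity)
    have g1 := gibbs_pt (a 1) (x * t / 2) (hnn 1) (by positivity) (fun _ => by positivity)
    have g2 := gibbs_pt (a 2) (x * t / 2) (hnn 2) (by positivity) (fun _ => by positivity)
    have g4 := gibbs_pt (a 4) (x * t / 2) (hnn 4) (by positivity) (fun _ => by positivity)
    have g7 := gibbs_pt (a 7) (x * t / 2) (hnn 7) (by positivity) (fun _ => by positivity)
    have g5 := gibbs_pt (a 5) (x * x / 2) (hnn 5) (by positivity) (fun _ => by positivity)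
    have g6 := gibbs_pt (a 6) (x * x / 2) (hnn 6) (by positivity) (fun _ => by positivity)
    rw [ltt] at g0 g3
    rw [lxt] at g1 g2 g4 g7
    rw [lxx] at g5 g6
    have hcsum : t * t / 2 + x * t / 2 + x * t / 2 + t * t / 2 + x * t / 2
        + x * x / 2 + x * x / 2 + x * t / 2 = 1 := by rw [ht]; ring
    -- key bound
    have key : H₈ a ≤ -(a 0 * (Real.log t + Real.log t - Real.log 2)
        + a 1 * (Real.log x + Real.log t - Real.log 2)
        + a 2 * (Real.log x + Real.log t - Real.log 2)
        + a 3 * (Real.log t + Real.log t - Real.log 2)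
        + a 4 * (Real.log x + Real.log t - Real.log 2)
        + a 5 * (Real.log x + Real.log x - Real.log 2)
        + a 6 * (Real.log x + Real.log x - Real.log 2)
        + a 7 * (Real.log x + Real.log t - Real.log 2)) := by
      rw [hH8]; linarith [g0, g1, g2, g3, g4, g5, g6, g7]
    have heq : -(a 0 * (Real.log t + Real.log t - Real.log 2)
        + a 1 * (Real.log x + Real.log t - Real.log 2)
        + a 2 * (Real.log x + Real.log t - Real.log 2)
        + a 3 * (Real.log t + Real.log t - Real.log 2)
        + a 4 * (Real.log x + Real.log t - Real.log 2)
        + a 5 * (Real.log x + Real.log x - Real.log 2)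
        + a 6 * (Real.log x + Real.log x - Real.log 2)
        + a 7 * (Real.log x + Real.log t - Real.log 2))
        = Real.log 2 + 2 * H₂ x := by
      rw [H₂, ← ht]
      linear_combination (Real.log t - Real.log x) * h1 + (Real.log t - Real.log x) * h2
        + (Real.log 2 - 2 * Real.log t) * hsum
    linarith [key, heq.le]
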